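/- arXiv:1502.07904 — 4 statements merged into one kernel-verified Lean document; each statement's English description precedes it below -/
import Mathlib

section
/- Let J be a linear Jordan algebra over a field F with char F ≠ 2, and let a, b ∈ J satisfy a·b = 0. Then the squares of the multiplication operators commute: ⁅L_a∘L_a, L_b∘L_b⁆ = 0. -/
/-- In a linear Jordan algebra over a field of characteristic ≠ 2, if `a·b = 0`
then the squares of the multiplication operators commute: `⁅L_a∘L_a, L_b∘L_b⁆ = 0`. -/
theorem jordan_Lsquares_commute (F : Type*) [Field F] (hchar : (2 : F) ≠ 0)
    (J : Type*) [NonUnitalNonAssocRing J] [Module F J]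
    [SMulCommClass F J J] [IsScalarTower F J J]
    (comm : ∀ x y : J, x * y = y * x)
    (jordan : ∀ x y : J, (x * y) * (x * x) = x * (y * (x * x)))
    (a b : J) (hab : a * b = 0) :
    ⁅LinearMap.mul F J a ∘ₗ LinearMap.mul F J a,
      LinearMap.mul F J b ∘ₗ LinearMap.mul F J b⁆ = 0 := by
  -- cancel a factor of two using `(2 : F) ≠ 0`
  have half : ∀ x z : J, x + x = z + z → x = z := by
    intro x z h
    have h2 : (2:F) • x = (2:F) • z := by rw [two_smul, two_smul]; exact h
    calc x = (2:F)⁻¹ • ((2:F) • x) := (inv_smul_smul₀ hchar x).symm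
      _ = (2:F)⁻¹ • ((2:F) • z) := by rw [h2]
      _ = z := inv_smul_smul₀ hchar z
  -- fully linearized Jordan identity
  have ml : ∀ u v w y : J,
      (u*y)*(v*w) + (u*y)*(w*v) + (v*y)*(w*u) + (v*y)*(u*w) + (w*y)*(u*v) + (w*y)*(v*u) =
      u*(y*(v*w)) + u*(y*(w*v)) + v*(y*(w*u)) + v*(y*(u*w)) + w*(y*(u*v)) + w*(y*(v*u)) := by
    intro u v w y
    have h1 := jordan (u+v+w) y
    have h2 := jordan (u+v) y
    have h3 := jordan (u+w) y
    have h4 := jordan (v+w) y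
    have h5 := jordan u y
    have h6 := jordan v y
    have h7 := jordan w y
    have hcomb :
        ((u*y)*(v*w) + (u*y)*(w*v) + (v*y)*(w*u) + (v*y)*(u*w) + (w*y)*(u*v) + (w*y)*(v*u))
        - (u*(y*(v*w)) + u*(y*(w*v)) + v*(y*(w*u)) + v*(y*(u*w)) + w*(y*(u*v)) + w*(y*(v*u)))
        =
        (((u+v+w)*y)*((u+v+w)*(u+v+w)) - (u+v+w)*(y*((u+v+w)*(u+v+w))))
        - (((u+v)*y)*((u+v)*(u+v)) - (u+v)*(y*((u+v)*(u+v))))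
        - (((u+w)*y)*((u+w)*(u+w)) - (u+w)*(y*((u+w)*(u+w))))
        - (((v+w)*y)*((v+w)*(v+w)) - (v+w)*(y*((v+w)*(v+w))))
        + ((u*y)*(u*u) - u*(y*(u*u)))
        + ((v*y)*(v*v) - v*(y*(v*v)))
        + ((w*y)*(w*w) - w*(y*(w*w))) := by
      simp only [mul_add, add_mul]
      abel
    rw [h1, h2, h3, h4, h5, h6, h7] at hcomb
    simp only [sub_self, sub_zero, add_zero, zero_sub, neg_zero, zero_add] at hcomb
    exact sub_eq_zero.mp hcomb
  have hba : b * a = 0 := (comm b a).trans hab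
  -- L1 : L_a commutes with L_{b*b}
  have l1 : ∀ c : J, (a*c)*(b*b) = a*(c*(b*b)) := by
    intro c
    have h := ml b a b c
    rw [hab, hba] at h
    simp only [mul_zero, zero_mul, add_zero, zero_add] at h
    exact half _ _ (h.trans (by abel))
  -- L2 : b(b(ac)) + a(b(bc)) = (b*b)*(a*c)
  have l2 : ∀ c : J, b*(b*(a*c)) + a*(b*(b*c)) = (b*b)*(a*c) := by
    intro c
    have h := ml b a c b
    rw [hab, hba, comm c a, comm c b] at h
    simp only [mul_zero, zero_mul, add_zero, zero_add] at h
    exact (half _ _ (h.trans (by abel))).symm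
  ext c
  simp only [Ring.lie_def, LinearMap.sub_apply, Module.End.mul_apply, LinearMap.comp_apply,
    LinearMap.zero_apply, LinearMap.mul_apply']
  rw [sub_eq_zero]
  have e1 : a*(b*(b*c)) = (b*b)*(a*c) - b*(b*(a*c)) := by rw [← l2 c]; abel
  calc a*(a*(b*(b*c))) = a*((b*b)*(a*c)) - a*(b*(b*(a*c))) := by rw [e1, mul_sub]
    _ = (b*b)*(a*(a*c)) - a*(b*(b*(a*c))) := by
        rw [comm (b*b) (a*c), ← l1 (a*c), comm (a*(a*c)) (b*b)]
    _ = (b*(b*(a*(a*c))) + a*(b*(b*(a*c)))) - a*(b*(b*(a*c))) := by rw [l2 (a*c)]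
    _ = b*(b*(a*(a*c))) := by abel
end

section
/- (Lemma 2) Let J be a linear Jordan algebra over a field F with char F ≠ 2, and let a, b ∈ J satisfy a·b = 0. Then ⁅U_a, U_b⁆ = ⁅L_{a·a}, L_{b·b}⁆, where U_x = 2·L_x∘L_x − L_{x·x}. -/
/-- Lemma 2: in a linear Jordan algebra over a field of characteristic ≠ 2,
if `a·b = 0` then `⁅U_a, U_b⁆ = ⁅L_{a·a}, L_{b·b}⁆`, where
`U_x = 2·L_x∘L_x − L_{x·x}`. -/
theorem jordan_U_commutator_eq (F : Type*) [Field F] (hchar : (2 : F) ≠ 0)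
    (J : Type*) [NonUnitalNonAssocRing J] [Module F J]
    [SMulCommClass F J J] [IsScalarTower F J J]
    (comm : ∀ x y : J, x * y = y * x)
    (jordan : ∀ x y : J, (x * y) * (x * x) = x * (y * (x * x)))
    (a b : J) (hab : a * b = 0) :
    ⁅2 • (LinearMap.mul F J a ∘ₗ LinearMap.mul F J a) - LinearMap.mul F J (a * a),
      2 • (LinearMap.mul F J b ∘ₗ LinearMap.mul F J b) - LinearMap.mul F J (b * b)⁆ =
    ⁅LinearMap.mul F J (a * a), LinearMap.mul F J (b * b)⁆ := by
  have hba : b * a = 0 := by rw [comm]; exact hab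
  have cancel : ∀ u v : J, u + u = v + v → u = v := by
    intro u v h
    have h2 : (2:F) • u = (2:F) • v := by rw [two_smul, two_smul]; exact h
    have h3 := congrArg (fun t => (2:F)⁻¹ • t) h2
    simpa [inv_smul_smul₀ hchar] using h3
  have L2 : ∀ x z w y : J,
      ((z*y)*(x*w) + (x*y)*(w*z) + (w*y)*(x*z)) + ((z*y)*(w*x) + (x*y)*(z*w) + (w*y)*(z*x)) =
      (z*(y*(x*w)) + x*(y*(w*z)) + w*(y*(x*z))) + (z*(y*(w*x)) + x*(y*(z*w)) + w*(y*(z*x))) := by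
    intro x z w y
    have comb :
        (((x+w+z)*y)*((x+w+z)*(x+w+z))
          + ((x+w)*(y*((x+w)*(x+w))) + (x+z)*(y*((x+z)*(x+z))) + (w+z)*(y*((w+z)*(w+z))))
          + ((x*y)*(x*x) + (w*y)*(w*w) + (z*y)*(z*z)))
        =
        ((x+w+z)*(y*((x+w+z)*(x+w+z)))
          + (((x+w)*y)*((x+w)*(x+w)) + ((x+z)*y)*((x+z)*(x+z)) + ((w+z)*y)*((w+z)*(w+z)))
          + (x*(y*(x*x)) + w*(y*(w*w)) + z*(y*(z*z)))) := by
      rw [jordan (x+w+z) y, jordan (x+w) y, jordan (x+z) y, jordan (w+z) y,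
        jordan x y, jordan w y, jordan z y]
    have h4 :
        (((z*y)*(x*w) + (x*y)*(w*z) + (w*y)*(x*z)) + ((z*y)*(w*x) + (x*y)*(z*w) + (w*y)*(z*x)))
          + ((x+w+z)*(y*((x+w+z)*(x+w+z)))
          + (((x+w)*y)*((x+w)*(x+w)) + ((x+z)*y)*((x+z)*(x+z)) + ((w+z)*y)*((w+z)*(w+z)))
          + (x*(y*(x*x)) + w*(y*(w*w)) + z*(y*(z*z))))
        =
        ((z*(y*(x*w)) + x*(y*(w*z)) + w*(y*(x*z))) + (z*(y*(w*x)) + x*(y*(z*w)) + w*(y*(z*x))))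
          + (((x+w+z)*y)*((x+w+z)*(x+w+z))
          + ((x+w)*(y*((x+w)*(x+w))) + (x+z)*(y*((x+z)*(x+z))) + (w+z)*(y*((w+z)*(w+z))))
          + ((x*y)*(x*x) + (w*y)*(w*w) + (z*y)*(z*z))) := by
      simp only [mul_add, add_mul]
      abel
    rw [comb] at h4
    exact add_right_cancel h4
  -- Fact A : L_b commutes with L_{a*a}
  have factA : ∀ y : J, (a*a) * (b*y) = b * ((a*a)*y) := by
    intro y
    have h := L2 a b a y
    simp only [hab, hba, mul_zero, zero_mul, add_zero, zero_add] at h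
    have h' : (b*y)*(a*a) = b*(y*(a*a)) := cancel _ _ h
    rw [comm (a*a) (b*y), h', comm y (a*a)]
  have factB : ∀ y : J, (b*b) * (a*y) = a * ((b*b)*y) := by
    intro y
    have h := L2 b a b y
    simp only [hab, hba, mul_zero, zero_mul, add_zero, zero_add] at h
    have h' : (a*y)*(b*b) = a*(y*(b*b)) := cancel _ _ h
    rw [comm (b*b) (a*y), h', comm y (b*b)]
  -- G' : L_{a*a} L_b = L_b L_a L_a + L_a L_a L_b
  have G' : ∀ z : J, (a*a)*(b*z) = b*(a*(a*z)) + a*(a*(b*z)) := by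
    intro z
    have h := L2 b z a a
    simp only [hab, hba, mul_zero, zero_mul, add_zero, zero_add] at h
    rw [comm z b, comm z a] at h
    exact cancel _ _ h
  have G : ∀ z : J, (b*b)*(a*z) = a*(b*(b*z)) + b*(b*(a*z)) := by
    intro z
    have h := L2 a z b b
    simp only [hab, hba, mul_zero, zero_mul, add_zero, zero_add] at h
    rw [comm z a, comm z b] at h
    exact cancel _ _ h
  -- main : L_a L_a commutes with L_b L_b
  have main : ∀ z : J, a*(a*(b*(b*z))) = b*(b*(a*(a*z))) := by
    intro z
    have e1 := G' (b*z)
    have e2 := G' z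
    have e3 : (a*a)*(b*(b*z)) = b*(b*(a*(a*z))) + b*(a*(a*(b*z))) := by
      rw [factA (b*z), e2, mul_add]
    rw [e3] at e1
    rw [add_comm (b*(b*(a*(a*z))))] at e1
    exact (add_left_cancel e1).symm
  -- cross commutations
  have cross1 : ∀ z : J, a*(a*((b*b)*z)) = (b*b)*(a*(a*z)) := by
    intro z
    rw [← factB z, factB (a*z)]
  have cross2 : ∀ z : J, b*(b*((a*a)*z)) = (a*a)*(b*(b*z)) := by
    intro z
    rw [← factA z, factA (b*z)]
  ext z
  simp only [Ring.lie_def, LinearMap.sub_apply, Module.End.mul_apply, LinearMap.smul_apply,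
    LinearMap.comp_apply, LinearMap.mul_apply', two_smul, mul_add, mul_sub, add_mul, sub_mul,
    LinearMap.add_apply]
  rw [main z, cross1 z, cross2 z]
  abel
end

section
/- Let J be a unital cubic linear Jordan algebra over a field F with char F ≠ 2, with trace form t, symmetric bilinear form S and symmetric trilinear form N satisfying a³ = t(a)·a² − S(a,a)·a + N(a,a,a)·1 for all a ∈ J. If a, b ∈ J satisfy a·b = 0, then for all c ∈ J: ((a·a)·b, c, b) = −2·S(a,b)·(a, c, b), where (x,y,z) = (x·y)·z − x·(y·z) is the associator. -/
/-- In a unital cubic linear Jordan algebra over a field of characteristic ≠ 2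
(with trace form `t`, symmetric bilinear form `S` and symmetric trilinear form `N`
satisfying `a³ = t(a)·a² − S(a,a)·a + N(a,a,a)·1`), if `a·b = 0` then
`((a·a)·b, c, b) = −2·S(a,b)·(a, c, b)` for all `c`, where
`(x,y,z) = (x·y)·z − x·(y·z)` is the associator. -/
theorem cubic_jordan_associator_step (F : Type*) [Field F] (hchar : (2 : F) ≠ 0)
    (J : Type*) [NonAssocRing J] [Module F J]
    [SMulCommClass F J J] [IsScalarTower F J J]
    (comm : ∀ x y : J, x * y = y * x)
    (jordan : ∀ x y : J, (x * y) * (x * x) = x * (y * (x * x)))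
    (t : J →ₗ[F] F) (S : J →ₗ[F] J →ₗ[F] F) (N : J →ₗ[F] J →ₗ[F] J →ₗ[F] F)
    (hS : ∀ x y : J, S x y = S y x)
    (hN₁ : ∀ x y z : J, N x y z = N y x z)
    (hN₂ : ∀ x y z : J, N x y z = N x z y)
    (hcubic : ∀ x : J, x * (x * x) = t x • (x * x) - S x x • x + N x x x • (1 : J))
    (a b : J) (hab : a * b = 0) (c : J) :
    (((a * a) * b) * c) * b - ((a * a) * b) * (c * b) =
      (-(2 * S a b)) • ((a * c) * b - a * (c * b)) := by
  have cancel : ∀ x y : J, (2:F) • x = (2:F) • y → x = y := by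
    intro x y h
    have := congrArg (fun z => (2:F)⁻¹ • z) h
    simpa [inv_smul_smul₀ hchar] using this
  -- Step 1: (a², c, b) = 0, i.e. ((a*a)*c)*b = (a*a)*(c*b)
  have hA : ((a * a) * c) * b = (a * a) * (c * b) := by
    have h1 := jordan (a + b) c
    have h2 := jordan (a - b) c
    have hb := jordan b c
    simp only [add_mul, mul_add, sub_mul, mul_sub, comm b a, hab, mul_zero, zero_mul,
      add_zero, zero_add, sub_zero, zero_sub, mul_neg, neg_mul, neg_neg,
      sub_neg_eq_add] at h1 h2
    have key : (2:F) • ((b * c) * (a * a)) = (2:F) • (b * (c * (a * a))) := by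
      linear_combination (norm := module) h1 - h2 - (2:F) • hb
    have h0 := cancel _ _ key
    rw [comm (b*c) (a*a), comm b c, comm c (a*a), comm b ((a*a)*c)] at h0
    exact h0.symm
  -- Step 2: linearized cubic identity with a·b = 0
  have hstar : b * (a * a) = t b • (a * a) - (S a b + S b a) • a - S a a • b
      + (N a a b + N a b a + N b a a) • (1 : J) := by
    have h1 := hcubic (a + b)
    have h2 := hcubic (a - b)
    have hb := hcubic b
    simp only [map_add, map_sub, LinearMap.add_apply, LinearMap.sub_apply,
      add_mul, mul_add, sub_mul, mul_sub, comm b a, hab, mul_zero, zero_mul,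
      add_zero, zero_add, sub_zero, zero_sub, mul_neg, neg_mul, neg_neg,
      sub_neg_eq_add] at h1 h2
    have key : (2:F) • (b * (a * a)) = (2:F) • (t b • (a * a) - (S a b + S b a) • a
        - S a a • b + (N a a b + N a b a + N b a a) • (1 : J)) := by
      linear_combination (norm := module) h1 - h2 - (2:F) • hb
    exact cancel _ _ key
  have hbcb : (b * c) * b = b * (c * b) := by
    rw [comm b c, comm (c * b) b]
  rw [comm (a * a) b, hstar]
  simp only [sub_mul, add_mul, smul_mul_assoc, one_mul]
  rw [hA, hbcb, hS b a]
  match_scalars <;> ring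
end

section
/- Let J be a unital cubic linear Jordan algebra over a field F with char F ≠ 2, with trace form t, symmetric bilinear form S and symmetric trilinear form N satisfying a³ = t(a)·a² − S(a,a)·a + N(a,a,a)·1 for all a ∈ J. If a, b ∈ J satisfy a·b = 0, then S(a,b)·((a·a)·b) = 0. -/
/-- In a unital cubic linear Jordan algebra over a field of characteristic ≠ 2
(with trace form `t`, symmetric bilinear form `S` and symmetric trilinear form `N`
satisfying `a³ = t(a)·a² − S(a,a)·a + N(a,a,a)·1`), if `a·b = 0` then
`S(a,b)·((a·a)·b) = 0`. -/
theorem cubic_jordan_dichotomy (F : Type*) [Field F] (hchar : (2 : F) ≠ 0)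
    (J : Type*) [NonAssocRing J] [Module F J]
    [SMulCommClass F J J] [IsScalarTower F J J]
    (comm : ∀ x y : J, x * y = y * x)
    (jordan : ∀ x y : J, (x * y) * (x * x) = x * (y * (x * x)))
    (t : J →ₗ[F] F) (S : J →ₗ[F] J →ₗ[F] F) (N : J →ₗ[F] J →ₗ[F] J →ₗ[F] F)
    (hS : ∀ x y : J, S x y = S y x)
    (hN₁ : ∀ x y z : J, N x y z = N y x z)
    (hN₂ : ∀ x y z : J, N x y z = N x z y)
    (hcubic : ∀ x : J, x * (x * x) = t x • (x * x) - S x x • x + N x x x • (1 : J))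
    (a b : J) (hab : a * b = 0) :
    S a b • ((a * a) * b) = 0 := by
  have hba : b * a = 0 := by rw [comm]; exact hab
  have h0 : a * (b * (a * a)) = 0 := by
    have h := jordan a b; rw [hab, zero_mul] at h; exact h.symm
  have h0' : b * (a * (b * b)) = 0 := by
    have h := jordan b a; rw [hba, zero_mul] at h; exact h.symm
  -- Step 1 : b * a³ = 0
  have j1 := jordan (a+b) a
  have j2 := jordan (a-b) a
  simp only [add_mul, mul_add, sub_mul, mul_sub, hab, hba, zero_mul, mul_zero,
    add_zero, zero_add, sub_zero, zero_sub, mul_neg, neg_mul, neg_neg, sub_neg_eq_add,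
    h0'] at j1 j2
  have h := j1.symm.trans j2
  have h2 : b * (a * (a * a)) = -(b * (a * (a * a))) := by
    have h' := add_right_cancel h
    rw [sub_eq_add_neg] at h'
    exact add_left_cancel h'
  have hcube : b * (a * (a * a)) = 0 := by
    have h3 : (2 : F) • (b * (a * (a * a))) = 0 := by
      rw [two_smul F]; exact add_eq_zero_iff_eq_neg.mpr h2
    calc b * (a * (a * a)) = (2:F)⁻¹ • ((2:F) • (b * (a * (a * a)))) :=
          (inv_smul_smul₀ hchar _).symm
      _ = 0 := by rw [h3, smul_zero]
  -- Step 2 : polarized cubic identity (doubled)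
  have j3 := hcubic (a+b)
  have j4 := hcubic (a-b)
  have jb := hcubic b
  simp only [add_mul, mul_add, sub_mul, mul_sub, hab, hba, zero_mul, mul_zero,
    add_zero, zero_add, sub_zero, zero_sub, mul_neg, neg_mul, neg_neg, sub_neg_eq_add,
    map_add, map_sub, LinearMap.add_apply, LinearMap.sub_apply] at j3 j4
  have hQ2 : b * (a * a) + b * (a * a) = (t b • (a * a) + t b • (a * a))
      - (S a b • a + S a b • a + (S a b • a + S a b • a))
      - (S a a • b + S a a • b)
      + ((N a a b + N a a b + N a a b + N a a b + N a a b + N a a b) • (1:J)) := by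
    rw [hN₁ b a a, hN₂ a b a, hN₂ b b a, hN₁ b a b, hS b a] at j3 j4
    linear_combination (norm := module) j3 - j4 - jb - jb
  -- Step 3 : multiply by a on the left
  have m1 := congrArg (fun z : J => a * z) hQ2
  simp only [mul_add, mul_sub, mul_smul_comm, mul_one, h0, hab, smul_zero,
    add_zero, zero_add, sub_zero] at m1
  -- Step 4 : multiply by b on the left
  have m2 := congrArg (fun z : J => b * z) m1
  simp only [mul_add, mul_sub, mul_smul_comm, mul_one, hcube, hba, mul_zero, smul_zero,
    add_zero, zero_add, sub_zero, zero_sub] at m2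
  rw [comm (a*a) b]
  set x := S a b • (b * (a * a)) with hx
  have h4 : ((2:F) * (2:F)) • x = 0 := by
    rw [mul_smul, two_smul F, two_smul F]
    exact neg_eq_zero.mp m2.symm
  calc x = ((2:F) * (2:F))⁻¹ • (((2:F) * (2:F)) • x) :=
        (inv_smul_smul₀ (mul_ne_zero hchar hchar) _).symm
    _ = 0 := by rw [h4, smul_zero]
end
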